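/- Let P and Q be fields, R a subring of Q, and h : R → P a ring homomorphism. Let C : 0 → C_p → C_{p−1} → ⋯ → C_0 → 0 be a chain complex of finitely generated free R-modules. Then for any integers n ≥ 0 and r, Σ_{s=r}^{2n+r} (−1)^{s−r} dim_Q H_s(C ⊗_R Q) ≤ Σ_{s=r}^{2n+r} (−1)^{s−r} dim_P H_s(C ⊗_h P). -/

import Mathlib

/-!
Since `dim H_s = dim C_s - rank ∂_s - rank ∂_{s+1}`, the alternating sum of the Betti numbers
over `s = r, …, r + 2n` telescopes to `Σ (-1)^(s-r) dim C_s - rank ∂_r - rank ∂_{r+2n+1}`, over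
either coefficient field. The first term does not depend on the coefficients, and the ranks can
only drop along `h`: a nonzero maximal minor of `∂ ⊗_h P` is the image under `h` of a nonzero
minor of `∂`, which stays nonzero in `Q ⊇ R`.
-/

open Matrix Module Submodule Finset

section RankBaseChange

variable {K : Type*} [Field K] {m n : Type*} [Fintype n]

theorem exists_linearIndependent_comp_fin {ι V : Type*} [Finite ι] [AddCommGroup V] [Module K V]
    (v : ι → V) :
    ∃ a : Fin (finrank K (span K (Set.range v))) → ι, LinearIndependent K (v ∘ a) := by
  obtain ⟨κ, a, ha, hspan, hli⟩ := exists_linearIndependent' K v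
  have : Finite κ := Finite.of_injective a ha
  have : Fintype κ := Fintype.ofFinite κ
  have hcard : finrank K (span K (Set.range v)) = Fintype.card κ := by
    rw [← hspan, finrank_span_eq_card hli]
  exact ⟨a ∘ (Fintype.equivFinOfCardEq hcard.symm).symm,
    hli.comp _ (Fintype.equivFinOfCardEq hcard.symm).symm.injective⟩

namespace Matrix

theorem exists_linearIndependent_cols (M : Matrix m n K) :
    ∃ g : Fin M.rank → n, LinearIndependent K (M.submatrix id g).col := by
  rw [rank_eq_finrank_span_cols]
  exact exists_linearIndependent_comp_fin M.col

theorem exists_linearIndependent_rows [Fintype m] (M : Matrix m n K) :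
    ∃ f : Fin M.rank → m, LinearIndependent K (M.submatrix f id).row := by
  have h := Mᵀ.exists_linearIndependent_cols
  rw [rank_transpose] at h
  exact h

theorem exists_submatrix_det_ne_zero [Fintype m] (M : Matrix m n K) :
    ∃ (f : Fin M.rank → m) (g : Fin M.rank → n), (M.submatrix f g).det ≠ 0 := by
  obtain ⟨g, hg⟩ := M.exists_linearIndependent_cols
  have hN : (M.submatrix id g).rank = M.rank := by
    rw [← rank_transpose, hg.rank_matrix, Fintype.card_fin]
  have hrows := (M.submatrix id g).exists_linearIndependent_rows
  rw [hN] at hrows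
  obtain ⟨f, hf⟩ := hrows
  refine ⟨f, g, ?_⟩
  exact ((isUnit_iff_isUnit_det _).mp (linearIndependent_rows_iff_isUnit.mp hf)).ne_zero

theorem rank_map_le_rank_map [Fintype m] {R L : Type*} [CommRing R] [CommRing L] [IsDomain L]
    (M : Matrix m n R) (φ : R →+* K) {ι : R →+* L} (hι : Function.Injective ι) :
    (M.map φ).rank ≤ (M.map ι).rank := by
  obtain ⟨f, g, hdet⟩ := (M.map φ).exists_submatrix_det_ne_zero
  rw [submatrix_map, ← RingHom.mapMatrix_apply, ← RingHom.map_det] at hdet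
  have hdet' : ((M.submatrix f g).map ι).det ≠ 0 := by
    rw [← RingHom.mapMatrix_apply, ← RingHom.map_det, map_ne_zero_iff _ hι]
    exact fun h0 => hdet (by rw [h0, map_zero])
  calc (M.map φ).rank ≤ Fintype.card (Fin (M.map φ).rank) := by rw [Fintype.card_fin]
    _ = ((M.map ι).submatrix f g).rank := by rw [submatrix_map, rank_of_det_ne_zero hdet']
    _ ≤ (M.map ι).rank := rank_submatrix_le _ _ _

end Matrix

end RankBaseChange

section Homology

variable {K : Type*} [Field K]

theorem finrank_homology_add_rank_add_rank {a b c : Type*} [Fintype a] [Fintype b] [Fintype c]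
    {B : Matrix a b K} {C : Matrix b c K} (hBC : B * C = 0) :
    finrank K (LinearMap.ker B.mulVecLin ⧸
      (LinearMap.range C.mulVecLin).comap (LinearMap.ker B.mulVecLin).subtype)
      + C.rank + B.rank = Fintype.card b := by
  have hle : LinearMap.range C.mulVecLin ≤ LinearMap.ker B.mulVecLin := by
    rw [LinearMap.range_le_ker_iff, ← mulVecLin_mul, hBC, mulVecLin_zero]
  have hquot := finrank_quotient_add_finrank
    ((LinearMap.range C.mulVecLin).comap (LinearMap.ker B.mulVecLin).subtype)
  have hboundaries := (comapSubtypeEquivOfLe hle).finrank_eq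
  have hrankNullity := B.mulVecLin.finrank_range_add_finrank_ker
  rw [finrank_fintype_fun_eq_card] at hrankNullity
  rw [rank, rank]
  omega

theorem alternating_sum_add_succ (u : ℤ → ℤ) (r : ℤ) (N : ℕ) :
    ∑ s ∈ range N, (-1 : ℤ) ^ s * (u (r + s) + u (r + s + 1)) = u r - (-1) ^ N * u (r + N) := by
  induction N with
  | zero => simp
  | succ N ih =>
    rw [sum_range_succ, ih, pow_succ, Nat.cast_succ, ← add_assoc]
    ring

theorem alternating_sum_homology_eq (c : ℤ → ℕ)
    (A : ∀ k : ℤ, Matrix (Fin (c (k - 1))) (Fin (c k)) K)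
    (hcomp : ∀ k : ℤ, A (k - 1) * A k = 0) (H : ℤ → ℕ)
    (hH : ∀ k : ℤ, H (k - 1) = finrank K (LinearMap.ker (A (k - 1)).mulVecLin ⧸
      (LinearMap.range (A k).mulVecLin).comap (LinearMap.ker (A (k - 1)).mulVecLin).subtype))
    (r : ℤ) (N : ℕ) :
    ∑ s ∈ range N, (-1 : ℤ) ^ s * (H (r + s) : ℤ) =
      ∑ s ∈ range N, (-1 : ℤ) ^ s * (c (r + s) : ℤ) - (A r).rank
        + (-1) ^ N * (A (r + N)).rank := by
  set rk : ℤ → ℤ := fun k => ((A k).rank : ℤ) with hrk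
  have hdim' (k : ℤ) : (H (k - 1) : ℤ) = c (k - 1) - rk (k - 1) - rk k := by
    have h := finrank_homology_add_rank_add_rank (hcomp k)
    rw [← hH, Fintype.card_fin] at h
    simp only [hrk]
    omega
  have hdim (j : ℤ) : (H j : ℤ) = c j - (rk j + rk (j + 1)) := by
    simpa only [add_sub_cancel_right, sub_sub] using hdim' (j + 1)
  simp_rw [hdim, mul_sub, sum_sub_distrib, alternating_sum_add_succ rk]
  ring

end Homology

/-- The complex is presented by the matrices `A k` of the differentials `C_k → C_{k-1}`. -/
theorem morse_inequality_base_change_general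
    (Q P : Type*) [Field Q] [Field P] (R : Subring Q) (h : R →+* P)
    (c : ℤ → ℕ)
    (A : ∀ k : ℤ, Matrix (Fin (c (k - 1))) (Fin (c k)) R)
    (hcomp : ∀ k : ℤ, A (k - 1) * A k = 0)
    (hQ hP : ℤ → ℕ)
    (hhQ : ∀ k : ℤ, hQ (k - 1) =
      Module.finrank Q
        (LinearMap.ker (Matrix.mulVecLin ((A (k - 1)).map (fun x => (x : Q)))) ⧸
          (LinearMap.range (Matrix.mulVecLin ((A k).map (fun x => (x : Q))))).comap
            (LinearMap.ker
              (Matrix.mulVecLin ((A (k - 1)).map (fun x => (x : Q))))).subtype))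
    (hhP : ∀ k : ℤ, hP (k - 1) =
      Module.finrank P
        (LinearMap.ker (Matrix.mulVecLin ((A (k - 1)).map (fun x => h x))) ⧸
          (LinearMap.range (Matrix.mulVecLin ((A k).map (fun x => h x)))).comap
            (LinearMap.ker
              (Matrix.mulVecLin ((A (k - 1)).map (fun x => h x)))).subtype))
    (r : ℤ) (n : ℕ) :
    ∑ s ∈ Finset.range (2 * n + 1), (-1 : ℤ) ^ s * (hQ (r + s) : ℤ) ≤
      ∑ s ∈ Finset.range (2 * n + 1), (-1 : ℤ) ^ s * (hP (r + s) : ℤ) := by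
  have hsumQ := alternating_sum_homology_eq c (fun k => (A k).map R.subtype)
    (fun k => by rw [← Matrix.map_mul, hcomp, Matrix.map_zero _ (map_zero _)]) hQ hhQ r (2 * n + 1)
  have hsumP := alternating_sum_homology_eq c (fun k => (A k).map h)
    (fun k => by rw [← Matrix.map_mul, hcomp, Matrix.map_zero _ (map_zero _)]) hP hhP r (2 * n + 1)
  have hrank (k : ℤ) : (((A k).map h).rank : ℤ) ≤ ((A k).map R.subtype).rank :=
    mod_cast (A k).rank_map_le_rank_map h Subtype.val_injective
  rw [hsumQ, hsumP, (Odd.neg_one_pow ⟨n, rfl⟩ : (-1 : ℤ) ^ (2 * n + 1) = -1)]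
  linarith [hrank r, hrank (r + (2 * n + 1 : ℕ))]

/-- Morse-type inequality for base changes of a bounded complex of finitely
generated free `R`-modules, where `R` is a subring of a field `Q` and
`h : R → P` a ring homomorphism to a field `P`.  The complex is presented by
matrices `A k` (the differential `C_k → C_{k-1}`) over `R`; `hQ s` and `hP s`
are the dimensions of the homology `H_s` of the complexes `C ⊗_R Q` and
`C ⊗_h P` obtained by applying the coefficient change to the matrices.  Then
`Σ_{s=r}^{2n+r} (-1)^{s-r} dim_Q H_s(C ⊗_R Q)
   ≤ Σ_{s=r}^{2n+r} (-1)^{s-r} dim_P H_s(C ⊗_h P)`. -/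
theorem morse_inequality_base_change
    (Q P : Type*) [Field Q] [Field P] (R : Subring Q) (h : R →+* P)
    (p : ℕ) (c : ℤ → ℕ)
    (hbounded : ∀ k : ℤ, (k < 0 ∨ (p : ℤ) < k) → c k = 0)
    (A : ∀ k : ℤ, Matrix (Fin (c (k - 1))) (Fin (c k)) R)
    (hcomp : ∀ k : ℤ, A (k - 1) * A k = 0)
    (hQ hP : ℤ → ℕ)
    (hhQ : ∀ k : ℤ, hQ (k - 1) =
      Module.finrank Q
        (LinearMap.ker (Matrix.mulVecLin ((A (k - 1)).map (fun x => (x : Q)))) ⧸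
          (LinearMap.range (Matrix.mulVecLin ((A k).map (fun x => (x : Q))))).comap
            (LinearMap.ker
              (Matrix.mulVecLin ((A (k - 1)).map (fun x => (x : Q))))).subtype))
    (hhP : ∀ k : ℤ, hP (k - 1) =
      Module.finrank P
        (LinearMap.ker (Matrix.mulVecLin ((A (k - 1)).map (fun x => h x))) ⧸
          (LinearMap.range (Matrix.mulVecLin ((A k).map (fun x => h x)))).comap
            (LinearMap.ker
              (Matrix.mulVecLin ((A (k - 1)).map (fun x => h x)))).subtype))
    (r : ℤ) (n : ℕ) :
    ∑ s ∈ Finset.range (2 * n + 1), (-1 : ℤ) ^ s * (hQ (r + s) : ℤ) ≤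
      ∑ s ∈ Finset.range (2 * n + 1), (-1 : ℤ) ^ s * (hP (r + s) : ℤ) :=
  morse_inequality_base_change_general Q P R h c A hcomp hQ hP hhQ hhP r n
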